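/- arXiv:2110.11141 — 2 statements merged into one kernel-verified Lean document; each statement's English description precedes it below -/
import Mathlib

section
/- With notation as in the POD construction (Gram matrix C of snapshots w⁽¹⁾,…,w⁽ᴺˢ⁾, eigenpairs (λᵢ, vⁱ) with orthonormal vⁱ and λ₁ ≥ … ≥ λ_{Nₛ}, POD basis ξᵢ for λᵢ > 0, and Π_N the orthogonal projection onto span{ξ₁,…,ξ_N}), the mean squared truncation error satisfies (1/Nₛ) Σᵢ₌₁^{Nₛ} ‖w⁽ⁱ⁾ − Π_N w⁽ⁱ⁾‖² = Σ_{j=N+1}^{Nₛ} λⱼ. -/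
/-! Expanding the snapshots in the eigenvectors of their Gram matrix, the POD modes `ξⱼ` are
orthonormal and `⟪w⁽ⁱ⁾, ξⱼ⟫ = √μⱼ vⱼᵢ`, where `μⱼ = Nₛ λⱼ` are the Gram eigenvalues. Hence
`Σᵢ ⟪w⁽ⁱ⁾, ξⱼ⟫² = μⱼ`, while `Σᵢ ‖w⁽ⁱ⁾‖²` is the trace of the Gram matrix, i.e. `Σⱼ μⱼ`.
Pythagoras for the orthogonal projection then leaves exactly the discarded eigenvalues. -/

open Finset Matrix

theorem Matrix.trace_eq_sum_of_mulVec_eq_smul_of_mul_transpose_eq_one {n R : Type*} [Fintype n]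
    [DecidableEq n] [CommRing R] (A V : Matrix n n R) (lam : n → R) (heig : ∀ i, A *ᵥ V i = lam i • V i)
    (hV : V * Vᵀ = 1) : A.trace = ∑ i, lam i := by
  have hAV : A * Vᵀ = Vᵀ * diagonal lam := by
    ext k j
    rw [mul_diagonal, transpose_apply]
    simpa [mul_apply, mulVec, dotProduct, mul_comm] using congrFun (heig j) k
  calc A.trace = (A * Vᵀ * V).trace := by rw [Matrix.mul_assoc, mul_eq_one_comm.1 hV, mul_one]
    _ = (V * Vᵀ * diagonal lam).trace := by
      rw [hAV, trace_mul_comm, Matrix.mul_assoc]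
    _ = ∑ i, lam i := by rw [hV, Matrix.one_mul, trace_diagonal]

section RealInnerProductSpace

variable {E : Type*} [NormedAddCommGroup E] [InnerProductSpace ℝ E] {ι : Type*}

open scoped RealInnerProductSpace

theorem norm_sub_sum_inner_smul_sq [DecidableEq ι] {e : ι → E} {s : Finset ι}
    (he : ∀ i ∈ s, ∀ j ∈ s, ⟪e i, e j⟫ = if i = j then 1 else 0) (x : E) :
    ‖x - ∑ j ∈ s, ⟪x, e j⟫ • e j‖ ^ 2 = ‖x‖ ^ 2 - ∑ j ∈ s, ⟪x, e j⟫ ^ 2 := by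
  set y := ∑ j ∈ s, ⟪x, e j⟫ • e j
  have hcoef : ∀ i ∈ s, ⟪e i, y⟫ = ⟪x, e i⟫ := by
    intro i hi
    simp only [y, inner_sum, real_inner_smul_right]
    rw [sum_eq_single_of_mem i hi fun j hj hji => by rw [he i hi j hj, if_neg hji.symm, mul_zero],
      he i hi i hi, if_pos rfl, mul_one]
  have hxy : ⟪x, y⟫ = ∑ j ∈ s, ⟪x, e j⟫ ^ 2 := by
    simp only [y, inner_sum, real_inner_smul_right, sq]
  have hyy : ‖y‖ ^ 2 = ∑ j ∈ s, ⟪x, e j⟫ ^ 2 := by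
    calc ‖y‖ ^ 2 = ⟪∑ j ∈ s, ⟪x, e j⟫ • e j, y⟫ := (real_inner_self_eq_norm_sq y).symm
      _ = ∑ j ∈ s, ⟪x, e j⟫ ^ 2 := by
        rw [sum_inner]
        exact sum_congr rfl fun j hj => by rw [real_inner_smul_left, hcoef j hj, sq]
  rw [norm_sub_sq_real, hxy, hyy]
  ring

variable [Fintype ι]

theorem inner_sum_smul_eq_gram_mulVec (w : ι → E) (c : ι → ℝ) (i : ι) :
    ⟪w i, ∑ k, c k • w k⟫ = (gram ℝ w *ᵥ c) i := by
  simp [inner_sum, real_inner_smul_right, mulVec, dotProduct, mul_comm]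

theorem sum_norm_sq_eq_trace_gram (w : ι → E) : ∑ i, ‖w i‖ ^ 2 = (gram ℝ w).trace := by
  simp [trace]

/-- The paper's `ξⱼ`, when `(μ j, v j)` is an eigenpair of the Gram matrix of the snapshots `w`. -/
noncomputable def podMode (w : ι → E) (μ : ι → ℝ) (v : ι → ι → ℝ) (j : ι) : E :=
  (√(μ j))⁻¹ • ∑ k, v j k • w k

variable {w : ι → E} {μ : ι → ℝ} {v : ι → ι → ℝ}
  (heig : ∀ j, gram ℝ w *ᵥ v j = μ j • v j)
include heig

theorem inner_podMode {j : ι} (hj : 0 < μ j) (i : ι) :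
    ⟪w i, podMode w μ v j⟫ = √(μ j) * v j i := by
  rw [podMode, real_inner_smul_right, inner_sum_smul_eq_gram_mulVec, heig, Pi.smul_apply,
    smul_eq_mul]
  field_simp
  rw [Real.sq_sqrt hj.le]

variable [DecidableEq ι] (horth : ∀ i j, ∑ k, v i k * v j k = if i = j then 1 else 0)
include horth

theorem inner_podMode_podMode {j l : ι} (hj : 0 < μ j) (hl : 0 < μ l) :
    ⟪podMode w μ v j, podMode w μ v l⟫ = if j = l then 1 else 0 := by
  have hexp : ⟪∑ k, v j k • w k, podMode w μ v l⟫ = √(μ l) * ∑ k, v j k * v l k := by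
    simp only [sum_inner, real_inner_smul_left, inner_podMode heig hl, mul_sum]
    exact sum_congr rfl fun k _ => by ring
  rw [podMode, real_inner_smul_left, hexp, horth]
  split_ifs with hjl
  · subst hjl
    rw [mul_one, inv_mul_cancel₀ (Real.sqrt_pos.2 hj).ne']
  · rw [mul_zero, mul_zero]

theorem sum_inner_podMode_sq {j : ι} (hj : 0 < μ j) :
    ∑ i, ⟪w i, podMode w μ v j⟫ ^ 2 = μ j := by
  calc ∑ i, ⟪w i, podMode w μ v j⟫ ^ 2 = μ j * ∑ i, v j i * v j i := by
        rw [mul_sum]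
        refine sum_congr rfl fun i _ => ?_
        rw [inner_podMode heig hj, mul_pow, Real.sq_sqrt hj.le, sq]
    _ = μ j := by rw [horth, if_pos rfl, mul_one]

theorem sum_norm_sq_eq_sum_eigenvalues : ∑ i, ‖w i‖ ^ 2 = ∑ j, μ j := by
  have hV : of v * (of v)ᵀ = 1 := by
    ext i j
    simp [mul_apply, one_apply, horth]
  rw [sum_norm_sq_eq_trace_gram]
  exact trace_eq_sum_of_mulVec_eq_smul_of_mul_transpose_eq_one _ (of v) μ heig hV

theorem sum_norm_sub_sum_inner_podMode_sq (s : Finset ι) (hpos : ∀ j ∈ s, 0 < μ j) :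
    ∑ i, ‖w i - ∑ j ∈ s, ⟪w i, podMode w μ v j⟫ • podMode w μ v j‖ ^ 2 = ∑ j ∈ sᶜ, μ j := by
  have horthonormal : ∀ j ∈ s, ∀ l ∈ s,
      ⟪podMode w μ v j, podMode w μ v l⟫ = if j = l then 1 else 0 :=
    fun j hj l hl => inner_podMode_podMode heig horth (hpos j hj) (hpos l hl)
  simp only [norm_sub_sum_inner_smul_sq horthonormal, sum_sub_distrib,
    sum_norm_sq_eq_sum_eigenvalues heig horth]
  rw [sum_comm, sum_congr rfl fun j hj => sum_inner_podMode_sq heig horth (hpos j hj),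
    ← sum_compl_add_sum s μ, add_sub_cancel_right]

end RealInnerProductSpace

theorem stmt_9_general {H : Type*} [NormedAddCommGroup H] [InnerProductSpace ℝ H] {Ns : ℕ}
    (w : Fin Ns → H) (C : Matrix (Fin Ns) (Fin Ns) ℝ)
    (hC : ∀ i j, C i j = (1 / (Ns : ℝ)) * (inner ℝ (w i) (w j) : ℝ))
    (lam : Fin Ns → ℝ) (v : Fin Ns → Fin Ns → ℝ)
    (heig : ∀ i, C.mulVec (v i) = lam i • v i)
    (horth : ∀ i j, (∑ k, v i k * v j k) = if i = j then (1 : ℝ) else 0)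
    (ξ : Fin Ns → H)
    (hξ : ∀ i, ξ i = (Real.sqrt (lam i * Ns))⁻¹ • ∑ j, v i j • w j)
    (N : ℕ) (hpos : ∀ j : Fin Ns, (j : ℕ) < N → 0 < lam j) :
    (1 / (Ns : ℝ)) * ∑ i, ‖w i - ∑ j ∈ Finset.univ.filter (fun j : Fin Ns => (j : ℕ) < N),
        (inner ℝ (w i) (ξ j) : ℝ) • ξ j‖ ^ 2
      = ∑ j ∈ Finset.univ.filter (fun j : Fin Ns => N ≤ (j : ℕ)), lam j := by
  rcases Nat.eq_zero_or_pos Ns with rfl | hNs_pos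
  · simp
  have hNs : (0 : ℝ) < Ns := Nat.cast_pos.2 hNs_pos
  have hgram : gram ℝ w = (Ns : ℝ) • C := by
    ext i j
    rw [gram_apply, Matrix.smul_apply, hC, smul_eq_mul, ← mul_assoc, mul_one_div_cancel hNs.ne',
      one_mul]
  have hgram_eig : ∀ j, gram ℝ w *ᵥ v j = (Ns * lam j) • v j := fun j => by
    rw [hgram, smul_mulVec, heig, smul_smul]
  have hξ_pod : ξ = podMode w (fun j => Ns * lam j) v :=
    funext fun j => by rw [hξ, podMode, mul_comm]
  rw [hξ_pod, sum_norm_sub_sum_inner_podMode_sq hgram_eig horth _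
      fun j hj => mul_pos hNs (hpos j (mem_filter.1 hj).2),
    ← mul_sum, one_div_mul_eq_div, mul_div_cancel_left₀ _ hNs.ne', compl_filter]
  simp only [not_lt]

theorem stmt_9 {H : Type*} [NormedAddCommGroup H] [InnerProductSpace ℝ H] {Ns : ℕ}
    (w : Fin Ns → H) (C : Matrix (Fin Ns) (Fin Ns) ℝ)
    (hC : ∀ i j, C i j = (1 / (Ns : ℝ)) * (inner ℝ (w i) (w j) : ℝ))
    (lam : Fin Ns → ℝ) (v : Fin Ns → Fin Ns → ℝ)
    (heig : ∀ i, C.mulVec (v i) = lam i • v i)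
    (horth : ∀ i j, (∑ k, v i k * v j k) = if i = j then (1 : ℝ) else 0)
    (hsort : ∀ i j : Fin Ns, i ≤ j → lam j ≤ lam i)
    (ξ : Fin Ns → H)
    (hξ : ∀ i, ξ i = (Real.sqrt (lam i * Ns))⁻¹ • ∑ j, v i j • w j)
    (N : ℕ) (hpos : ∀ j : Fin Ns, (j : ℕ) < N → 0 < lam j) :
    (1 / (Ns : ℝ)) * ∑ i, ‖w i - ∑ j ∈ Finset.univ.filter (fun j : Fin Ns => (j : ℕ) < N),
        (inner ℝ (w i) (ξ j) : ℝ) • ξ j‖ ^ 2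
      = ∑ j ∈ Finset.univ.filter (fun j : Fin Ns => N ≤ (j : ℕ)), lam j :=
  stmt_9_general w C hC lam v heig horth ξ hξ N hpos
end

section
/- Let ℂ be the homogenised elasticity tensor ℂ = ⟨C_μ(E_{kl} + ∇ˢũ^{kl})⟩ ⊗ E_{kl} obtained from the corrector problems with a symmetric, positive-semidefinite microscale tensor C_μ. Then ℂ is symmetric: ℂ E_{ij} · E_{kl} = ℂ E_{kl} · E_{ij} for all unit strains, i.e. C_{ijkl} = C_{klij}. -/
/-! Testing the corrector equation of `f` with the corrector `g f ∈ U` turns `c (e + g e) f` into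
the energy pairing `c (e + g e) (f + g f)`, which is symmetric in `e` and `f` because `c` is. -/

theorem stmt_14 {W : Type*} [AddCommGroup W] [Module ℝ W]
    (c : W →ₗ[ℝ] W →ₗ[ℝ] ℝ) (hcsym : ∀ x y : W, c x y = c y x)
    (U : Submodule ℝ W)
    (g : W → W) (hg : ∀ e, g e ∈ U)
    (hcorr : ∀ e : W, ∀ v ∈ U, c (e + g e) v = 0) :
    ∀ e f : W, c (e + g e) f = c (f + g f) e := by
  have energy_pairing : ∀ e f, c (e + g e) f = c (e + g e) (f + g f) := fun e f => by
    rw [map_add (c (e + g e)), hcorr e (g f) (hg f), add_zero]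
  intro e f
  rw [energy_pairing e f, energy_pairing f e, hcsym]
end
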